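/- The braid group of the sphere Br_n(S²) admits a presentation with two generators δ₁ and δ, subject to the relations δ₁δⁱδ₁δ⁻ⁱ = δⁱδ₁δ⁻ⁱδ₁ for 2 ≤ i ≤ n/2, δⁿ = (δδ₁)ⁿ⁻¹, and δⁿ(δ₁δ⁻¹)ⁿ⁻¹ = 1. That is, this presented group is isomorphic to the group with the Zariski–Fadell–Van Buskirk presentation. -/

import Mathlib

/-- Relators of the Zariski–Fadell–Van Buskirk presentation of the sphere braid group
`Br_n(S²)`, with generators `δ_{i+1}` indexed by `i : Fin (n-1)`.  The last relator is
`δ₁δ₂⋯δ_{n-2}δ_{n-1}²δ_{n-2}⋯δ₂δ₁ = (δ₁⋯δ_{n-1})·(δ_{n-1}⋯δ₁)`. -/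
def sphereBraidRels (n : ℕ) : Set (FreeGroup (Fin (n - 1))) :=
  {r | ∃ i j : Fin (n - 1), (i : ℕ) + 1 < (j : ℕ) ∧
      r = .of i * .of j * (.of i)⁻¹ * (.of j)⁻¹} ∪
  {r | ∃ (i : ℕ) (h : i + 1 < n - 1),
      r = .of ⟨i, by omega⟩ * .of ⟨i + 1, h⟩ * .of ⟨i, by omega⟩ *
        (.of ⟨i + 1, h⟩ * .of ⟨i, by omega⟩ * .of ⟨i + 1, h⟩)⁻¹} ∪
  {(List.ofFn (fun i : Fin (n - 1) => (FreeGroup.of i))).prod *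
    (List.ofFn (fun i : Fin (n - 1) => (FreeGroup.of i))).reverse.prod}

/-- Two-generator relators for the sphere braid group: generator `true` is `δ₁`,
generator `false` is `δ`. -/
def sphereTwoGenRels (n : ℕ) : Set (FreeGroup Bool) :=
  {r | ∃ i : ℕ, 2 ≤ i ∧ i ≤ n / 2 ∧
      r = .of true * (.of false) ^ i * .of true * ((.of false : FreeGroup Bool) ^ i)⁻¹ *
        ((.of false : FreeGroup Bool) ^ i * .of true * ((.of false : FreeGroup Bool) ^ i)⁻¹ *
          .of true)⁻¹} ∪
  {(.of false : FreeGroup Bool) ^ n * ((.of false * .of true : FreeGroup Bool) ^ (n - 1))⁻¹} ∪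
  {(.of false : FreeGroup Bool) ^ n * (.of true * (.of false : FreeGroup Bool)⁻¹) ^ (n - 1)}

/-!
Send `δ₁ ↦ δ₁` and `δ ↦ δ₁⋯δ_{n-1}`, and conversely `δ_{i+1} ↦ δⁱ δ₁ δ⁻ⁱ`. In the braid group the
braid relations make `δ₁⋯δ_{n-1}` conjugate `δ_i` to `δ_{i+1}`. In any group
`(a b)ᵏ = (∏_{i<k} bⁱ a b⁻ⁱ) bᵏ`; hence `δⁿ = (δ δ₁)ⁿ⁻¹` says precisely that the conjugates
`δⁱ δ₁ δ⁻ⁱ`, `i < n - 1`, multiply to `δ`, and `δⁿ (δ₁ δ⁻¹)ⁿ⁻¹ = 1` says the same for the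
conjugates of `δ₁⁻¹`: together they are the sphere relation. In the two-generator group `δⁿ` is
central, so the conjugates of `δ₁` are `n`-periodic and the commutations for `i ≤ n/2` give all
the others; the braid relation follows from `δ = δ₁ δ₂ M` with `M` commuting with `δ₁` and
`δ δ₁ δ⁻¹ = δ₂`.
-/

noncomputable section

namespace SphereBraid

variable {G : Type*} [Group G]

/-- `delta σ m = σ 0 * σ 1 * ⋯ * σ (m - 1)`; with `σ i` standing for `δ_{i+1}`,
`delta σ (n - 1)` is `δ = δ₁⋯δ_{n-1}`. -/
def delta (σ : ℕ → G) (m : ℕ) : G := ((List.range m).map σ).prod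

@[simp]
theorem delta_zero (σ : ℕ → G) : delta σ 0 = 1 := rfl

theorem delta_succ (σ : ℕ → G) (m : ℕ) : delta σ (m + 1) = delta σ m * σ m := by
  simp [delta, List.range_succ]

theorem delta_succ' (σ : ℕ → G) (m : ℕ) :
    delta σ (m + 1) = σ 0 * delta (fun i => σ (i + 1)) m := by
  simp [delta, List.range_succ_eq_map, Function.comp_def]

theorem delta_congr {σ τ : ℕ → G} {m : ℕ} (h : ∀ i < m, σ i = τ i) : delta σ m = delta τ m :=
  congrArg List.prod <| List.map_congr_left fun i hi => h i (List.mem_range.mp hi)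

theorem map_delta {H : Type*} [Group H] (f : G →* H) (σ : ℕ → G) (m : ℕ) :
    f (delta σ m) = delta (f ∘ σ) m := by
  simp [delta, map_list_prod]

theorem commute_delta {x : G} {σ : ℕ → G} {m : ℕ} (h : ∀ i < m, Commute x (σ i)) :
    Commute x (delta σ m) :=
  Commute.list_prod_right _ _ fun _ hy => by
    obtain ⟨i, hi, rfl⟩ := List.mem_map.mp hy
    exact h i (List.mem_range.mp hi)

theorem ofFn_eq_map_range {α : Type*} (f : ℕ → α) (m : ℕ) :
    List.ofFn (fun i : Fin m => f i) = (List.range m).map f := by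
  apply List.ext_get <;> simp

theorem delta_mul_reverse_eq_one_iff (σ : ℕ → G) (m : ℕ) :
    delta σ m * ((List.range m).map σ).reverse.prod = 1 ↔
      delta (fun i => (σ i)⁻¹) m = delta σ m := by
  have hrev : ((List.range m).map σ).reverse.prod = (delta (fun i => (σ i)⁻¹) m)⁻¹ := by
    simp [delta, List.prod_inv_reverse, Function.comp_def]
  rw [hrev, mul_inv_eq_one, eq_comm]

def conjSeq (a b : G) (i : ℕ) : G := b ^ i * a * (b ^ i)⁻¹

@[simp]
theorem conjSeq_zero (a b : G) : conjSeq a b 0 = a := by simp [conjSeq]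

theorem conjSeq_eq_conj (a b : G) (i : ℕ) : conjSeq a b i = MulAut.conj (b ^ i) a := rfl

theorem conjSeq_add (a b : G) (j k : ℕ) :
    conjSeq a b (j + k) = MulAut.conj (b ^ j) (conjSeq a b k) := by
  simp only [conjSeq_eq_conj, pow_add, map_mul, MulAut.mul_apply]

theorem conjSeq_inv (a b : G) : conjSeq a⁻¹ b = fun i => (conjSeq a b i)⁻¹ := by
  funext i
  simp [conjSeq, mul_assoc]

theorem map_conjSeq {H : Type*} [Group H] (f : G →* H) (a b : G) (i : ℕ) :
    f (conjSeq a b i) = conjSeq (f a) (f b) i := by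
  simp [conjSeq]

theorem delta_conjSeq_mul_pow (a b : G) (k : ℕ) :
    delta (conjSeq a b) k * b ^ k = (a * b) ^ k := by
  induction k with
  | zero => simp
  | succ k ih =>
    rw [delta_succ, pow_succ (a * b), ← ih, conjSeq]
    group

theorem mul_pow_eq_pow_iff (a b : G) (k n : ℕ) : (a * b) ^ k = b ^ n ↔ (b * a) ^ k = b ^ n := by
  have hconj : b * (a * b) ^ k = (b * a) ^ k * b :=
    SemiconjBy.pow_right (by simp only [SemiconjBy, mul_assoc]) k
  rw [← mul_right_inj b, hconj, (Commute.self_pow b n).eq, mul_left_inj]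

theorem delta_conjSeq_eq_of_pow_eq {a b : G} {n : ℕ} (hn : n ≠ 0) (h : (b * a) ^ (n - 1) = b ^ n) :
    delta (conjSeq a b) (n - 1) = b := by
  have hab := (mul_pow_eq_pow_iff a b _ _).mpr h
  rw [← delta_conjSeq_mul_pow, ← Nat.sub_one_add_one hn, pow_succ', Nat.add_sub_cancel] at hab
  exact mul_right_cancel hab

theorem braid_of_eq_mul_mul {x y z b : G} (hb : b = x * y * z) (hxz : Commute x z)
    (hy : SemiconjBy b x y) : x * y * x = y * x * y := by
  subst hb
  apply mul_right_cancel (b := z)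
  calc x * y * x * z = x * y * z * x := by rw [mul_assoc _ x, hxz.eq, ← mul_assoc]
    _ = y * (x * y * z) := hy
    _ = y * x * y * z := by simp only [mul_assoc]

structure IsBraidFamily (σ : ℕ → G) (m : ℕ) : Prop where
  commute : ∀ i j, i + 1 < j → j < m → Commute (σ i) (σ j)
  braid : ∀ i, i + 1 < m → σ i * σ (i + 1) * σ i = σ (i + 1) * σ i * σ (i + 1)

namespace IsBraidFamily

variable {σ : ℕ → G} {m : ℕ}

theorem mono (h : IsBraidFamily σ m) {l : ℕ} (hl : l ≤ m) : IsBraidFamily σ l where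
  commute i j hij hj := h.commute i j hij (by omega)
  braid i hi := h.braid i (by omega)

protected theorem inv (h : IsBraidFamily σ m) : IsBraidFamily (fun i => (σ i)⁻¹) m where
  commute i j hij hj := (h.commute i j hij hj).inv_inv
  braid i hi := by simpa only [mul_inv_rev, mul_assoc] using congrArg (·⁻¹) (h.braid i hi)

theorem semiconjBy_delta (h : IsBraidFamily σ m) {j : ℕ} (hj : j + 2 ≤ m) :
    SemiconjBy (delta σ m) (σ j) (σ (j + 1)) := by
  induction m with
  | zero => omega
  | succ m ih =>
    rw [delta_succ]
    obtain hjm | rfl : j + 2 ≤ m ∨ m = j + 1 := by omega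
    · exact (ih (h.mono m.le_succ) hjm).mul_left (h.commute j m (by omega) (by omega)).symm
    · have hc : Commute (σ (j + 1)) (delta σ j) :=
        commute_delta fun i hi => (h.commute i (j + 1) (by omega) (by omega)).symm
      rw [SemiconjBy, delta_succ]
      calc delta σ j * σ j * σ (j + 1) * σ j = delta σ j * (σ j * σ (j + 1) * σ j) := by group
        _ = delta σ j * (σ (j + 1) * σ j * σ (j + 1)) := by rw [h.braid j (by omega)]
        _ = delta σ j * σ (j + 1) * (σ j * σ (j + 1)) := by group
        _ = σ (j + 1) * (delta σ j * σ j * σ (j + 1)) := by rw [← hc.eq]; group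

theorem conjSeq_delta (h : IsBraidFamily σ m) {i : ℕ} (hi : i < m) :
    conjSeq (σ 0) (delta σ m) i = σ i := by
  suffices SemiconjBy (delta σ m ^ i) (σ 0) (σ i) from mul_inv_eq_of_eq_mul this
  induction i with
  | zero => simp
  | succ i ih =>
    rw [pow_succ']
    exact (h.semiconjBy_delta (by omega)).mul_left (ih (by omega))

theorem delta_mul_pow (h : IsBraidFamily σ m) : (delta σ m * σ 0) ^ m = delta σ m ^ (m + 1) := by
  rw [← mul_pow_eq_pow_iff, ← delta_conjSeq_mul_pow, delta_congr fun i hi => h.conjSeq_delta hi,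
    pow_succ']

end IsBraidFamily

/-- The sphere relation `δ₁⋯δ_m · δ_m⋯δ₁ = 1` is recorded as `δ₁⁻¹⋯δ_m⁻¹ = δ₁⋯δ_m`. -/
structure IsSphereBraidFamily (σ : ℕ → G) (m : ℕ) : Prop extends IsBraidFamily σ m where
  delta_inv : delta (fun i => (σ i)⁻¹) m = delta σ m

/-- `a` and `b` play `δ₁` and `δ`; the relation `δⁿ (δ₁ δ⁻¹)ⁿ⁻¹ = 1` is recorded in the
equivalent form `(δ δ₁⁻¹)ⁿ⁻¹ = δⁿ`. -/
structure SphereTwoGenRelations (a b : G) (n : ℕ) : Prop where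
  commute : ∀ i, 2 ≤ i → i ≤ n / 2 → Commute a (conjSeq a b i)
  pow_eq : (b * a) ^ (n - 1) = b ^ n
  pow_eq_inv : (b * a⁻¹) ^ (n - 1) = b ^ n

theorem IsSphereBraidFamily.sphereTwoGenRelations {σ : ℕ → G} {m : ℕ}
    (h : IsSphereBraidFamily σ m) : SphereTwoGenRelations (σ 0) (delta σ m) (m + 1) where
  commute i hi hin := by
    rw [h.conjSeq_delta (by omega)]
    exact h.commute 0 i (by omega) (by omega)
  pow_eq := h.delta_mul_pow
  pow_eq_inv := by
    simpa only [h.delta_inv, Nat.add_sub_cancel] using h.toIsBraidFamily.inv.delta_mul_pow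

namespace SphereTwoGenRelations

variable {a b : G} {n : ℕ}

theorem commute_pow (h : SphereTwoGenRelations a b n) : Commute a (b ^ n) := by
  have hconj : SemiconjBy a ((b * a) ^ (n - 1)) ((a * b) ^ (n - 1)) :=
    SemiconjBy.pow_right (by simp only [SemiconjBy, mul_assoc]) _
  rwa [h.pow_eq, (mul_pow_eq_pow_iff a b _ _).mpr h.pow_eq] at hconj

theorem conjSeq_self (h : SphereTwoGenRelations a b n) : conjSeq a b n = a :=
  mul_inv_eq_of_eq_mul h.commute_pow.eq.symm

theorem commute_conjSeq_of_le (h : SphereTwoGenRelations a b n) {d : ℕ} (hd : 2 ≤ d)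
    (hdn : d + 2 ≤ n) : Commute a (conjSeq a b d) := by
  by_cases hd2 : d ≤ n / 2
  · exact h.commute d hd hd2
  · -- conjugating by `b ^ d` turns `conjSeq a b (n - d)` into `conjSeq a b n = a`
    have hcomm := (h.commute (n - d) (by omega) (by omega)).map (MulAut.conj (b ^ d))
    rw [← conjSeq_add, Nat.add_sub_cancel' (by omega), h.conjSeq_self] at hcomm
    simpa only [conjSeq, MulAut.conj_apply] using hcomm.symm

theorem commute_conjSeq (h : SphereTwoGenRelations a b n) (i : ℕ) {d : ℕ} (hd : 2 ≤ d)
    (hdn : d + 2 ≤ n) : Commute (conjSeq a b i) (conjSeq a b (i + d)) := by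
  rw [conjSeq_eq_conj a b i, conjSeq_add]
  exact (h.commute_conjSeq_of_le hd hdn).map _

theorem delta_conjSeq (h : SphereTwoGenRelations a b n) (hn : n ≠ 0) :
    delta (conjSeq a b) (n - 1) = b :=
  delta_conjSeq_eq_of_pow_eq hn h.pow_eq

theorem delta_conjSeq_inv (h : SphereTwoGenRelations a b n) (hn : n ≠ 0) :
    delta (fun i => (conjSeq a b i)⁻¹) (n - 1) = b := by
  rw [← conjSeq_inv]
  exact delta_conjSeq_eq_of_pow_eq hn h.pow_eq_inv

theorem braid_conjSeq_zero (h : SphereTwoGenRelations a b n) (hn : 3 ≤ n) :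
    conjSeq a b 0 * conjSeq a b 1 * conjSeq a b 0 =
      conjSeq a b 1 * conjSeq a b 0 * conjSeq a b 1 := by
  obtain ⟨k, hk⟩ : ∃ k, n - 1 = k + 2 := ⟨n - 3, by omega⟩
  have hb := h.delta_conjSeq (by omega)
  rw [hk, delta_succ', delta_succ', ← mul_assoc] at hb
  refine braid_of_eq_mul_mul hb.symm ?_ ?_
  · exact commute_delta fun i hi => by
      simpa [add_assoc] using h.commute_conjSeq 0 (d := i + 2) (by omega) (by omega)
  · simp [SemiconjBy, conjSeq]

theorem isSphereBraidFamily (h : SphereTwoGenRelations a b n) (hn : n ≠ 0) :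
    IsSphereBraidFamily (conjSeq a b) (n - 1) where
  commute i j hij hj := by
    obtain ⟨d, rfl⟩ : ∃ d, j = i + d := ⟨j - i, by omega⟩
    exact h.commute_conjSeq i (by omega) (by omega)
  braid i hi := by
    simpa only [map_mul, ← conjSeq_add, add_zero] using
      congrArg (MulAut.conj (b ^ i)) (h.braid_conjSeq_zero (by omega))
  delta_inv := by rw [h.delta_conjSeq_inv hn, h.delta_conjSeq hn]

end SphereTwoGenRelations

theorem forall_sphereTwoGenRels_lift_eq_one_iff {n : ℕ} (f : Bool → G) :
    (∀ r ∈ sphereTwoGenRels n, FreeGroup.lift f r = 1) ↔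
      SphereTwoGenRelations (f true) (f false) n := by
  simp only [sphereTwoGenRels, Set.mem_union, Set.mem_ofPred_eq, Set.mem_singleton_iff, or_imp,
    forall_and, forall_eq, forall_exists_index, and_imp, forall_comm (α := FreeGroup Bool),
    ← imp_forall_iff, map_mul, map_inv, map_pow, FreeGroup.lift_apply_of]
  generalize f true = a, f false = b
  have hC (i : ℕ) : a * b ^ i * a * (b ^ i)⁻¹ * (b ^ i * a * (b ^ i)⁻¹ * a)⁻¹ = 1 ↔
      Commute a (conjSeq a b i) := by
    rw [mul_inv_eq_one, Commute, SemiconjBy, conjSeq]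
    simp only [mul_assoc]
  have hP : b ^ n * ((b * a) ^ (n - 1))⁻¹ = 1 ↔ (b * a) ^ (n - 1) = b ^ n := by
    rw [mul_inv_eq_one, eq_comm]
  have hQ : b ^ n * (a * b⁻¹) ^ (n - 1) = 1 ↔ (b * a⁻¹) ^ (n - 1) = b ^ n := by
    rw [mul_eq_one_iff_eq_inv, ← inv_pow, mul_inv_rev, inv_inv, eq_comm]
  simp only [hC, hP, hQ, and_assoc]
  exact ⟨fun ⟨hC, hP, hQ⟩ => ⟨hC, hP, hQ⟩, fun ⟨hC, hP, hQ⟩ => ⟨hC, hP, hQ⟩⟩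

theorem forall_sphereBraidRels_lift_eq_one_iff {n : ℕ} (σ : ℕ → G) :
    (∀ r ∈ sphereBraidRels n, FreeGroup.lift (fun i : Fin (n - 1) => σ i) r = 1) ↔
      IsSphereBraidFamily σ (n - 1) := by
  simp only [sphereBraidRels, Set.mem_union, Set.mem_ofPred_eq, Set.mem_singleton_iff, or_imp,
    forall_and, forall_eq, forall_exists_index, and_imp, forall_comm (α := FreeGroup (Fin (n - 1))),
    ← imp_forall_iff, map_mul, map_inv, map_list_prod, List.map_reverse, List.map_ofFn,
    Function.comp_def, FreeGroup.lift_apply_of, ofFn_eq_map_range, Fin.forall_iff, mul_inv_eq_one]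
  generalize n - 1 = m
  have hC : (∀ i, i < m → ∀ j, j < m → i + 1 < j → σ i * σ j * (σ i)⁻¹ = σ j) ↔
      ∀ i j, i + 1 < j → j < m → Commute (σ i) (σ j) := by
    simp only [mul_inv_eq_iff_eq_mul]
    exact ⟨fun h i j hij hj => h i (by omega) j hj hij, fun h i _ j hj hij => h i j hij hj⟩
  rw [hC, show ((List.range m).map σ).prod = delta σ m from rfl, delta_mul_reverse_eq_one_iff]
  exact ⟨fun ⟨⟨hC, hB⟩, hS⟩ => ⟨⟨hC, hB⟩, hS⟩, fun h => ⟨⟨h.commute, h.braid⟩, h.delta_inv⟩⟩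

open PresentedGroup

theorem forall_lift_of_eq_one {α : Type*} (rels : Set (FreeGroup α)) :
    ∀ r ∈ rels, FreeGroup.lift (of : α → PresentedGroup rels) r = 1 := fun _ hr =>
  (FreeGroup.lift_unique (mk rels) fun _ => rfl).symm.trans (one_of_mem hr)

variable {n : ℕ}

/-- The generators `δ_{k+1}` of the Zariski–Fadell–Van Buskirk presentation, extended by `1`
for `k ≥ n - 1`. -/
def sphereBraidGen (n : ℕ) : ℕ → PresentedGroup (sphereBraidRels n) :=
  Function.extend Fin.val of 1

theorem sphereBraidGen_val (i : Fin (n - 1)) : sphereBraidGen n i = of i :=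
  Fin.val_injective.extend_apply _ _ _

theorem delta_sphereBraidGen :
    delta (sphereBraidGen n) (n - 1) =
      (List.ofFn fun i : Fin (n - 1) => (of i : PresentedGroup (sphereBraidRels n))).prod := by
  simp only [← sphereBraidGen_val, ofFn_eq_map_range, delta]

theorem isSphereBraidFamily_sphereBraidGen : IsSphereBraidFamily (sphereBraidGen n) (n - 1) :=
  (forall_sphereBraidRels_lift_eq_one_iff _).mp <| by
    simpa only [sphereBraidGen_val] using forall_lift_of_eq_one _

theorem sphereTwoGenRelations_of :
    SphereTwoGenRelations (of true : PresentedGroup (sphereTwoGenRels n)) (of false) n :=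
  (forall_sphereTwoGenRels_lift_eq_one_iff _).mp (forall_lift_of_eq_one _)

def toSphereBraid (hn : n ≠ 0) :
    PresentedGroup (sphereTwoGenRels n) →* PresentedGroup (sphereBraidRels n) :=
  toGroup (f := fun x => cond x (sphereBraidGen n 0) (delta (sphereBraidGen n) (n - 1))) <|
    (forall_sphereTwoGenRels_lift_eq_one_iff _).mpr <| by
      simpa only [cond_true, cond_false, Nat.sub_one_add_one hn] using
        (isSphereBraidFamily_sphereBraidGen (n := n)).sphereTwoGenRelations

theorem toSphereBraid_of_true (hn : n ≠ 0) : toSphereBraid hn (of true) = sphereBraidGen n 0 :=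
  toGroup.of _

theorem toSphereBraid_of_false (hn : n ≠ 0) :
    toSphereBraid hn (of false) = delta (sphereBraidGen n) (n - 1) :=
  toGroup.of _

def ofSphereBraid (hn : n ≠ 0) :
    PresentedGroup (sphereBraidRels n) →* PresentedGroup (sphereTwoGenRels n) :=
  toGroup (f := fun i : Fin (n - 1) => conjSeq (of true) (of false) i) <|
    (forall_sphereBraidRels_lift_eq_one_iff _).mpr (sphereTwoGenRelations_of.isSphereBraidFamily hn)

theorem ofSphereBraid_sphereBraidGen (hn : n ≠ 0) {k : ℕ} (hk : k < n - 1) :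
    ofSphereBraid hn (sphereBraidGen n k) = conjSeq (of true) (of false) k := by
  rw [show k = (⟨k, hk⟩ : Fin (n - 1)) from rfl, sphereBraidGen_val, ofSphereBraid, toGroup.of]

def sphereTwoGenEquiv (hn : 2 ≤ n) :
    PresentedGroup (sphereTwoGenRels n) ≃* PresentedGroup (sphereBraidRels n) :=
  MonoidHom.toMulEquiv (toSphereBraid (by omega)) (ofSphereBraid (by omega))
    (ext fun x => by
      cases x
      · rw [MonoidHom.comp_apply, toSphereBraid_of_false, map_delta]
        exact (delta_congr fun k hk => ofSphereBraid_sphereBraidGen (by omega) hk).trans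
          (sphereTwoGenRelations_of.delta_conjSeq (by omega))
      · rw [MonoidHom.comp_apply, toSphereBraid_of_true,
          ofSphereBraid_sphereBraidGen _ (Nat.sub_pos_of_lt hn), conjSeq_zero]
        rfl)
    (ext fun i => by
      rw [MonoidHom.comp_apply, ofSphereBraid, toGroup.of, map_conjSeq, toSphereBraid_of_true,
        toSphereBraid_of_false, isSphereBraidFamily_sphereBraidGen.conjSeq_delta i.isLt,
        sphereBraidGen_val]
      rfl)

end SphereBraid

end

theorem two_generator_presentation_of_sphere_braid_group (n : ℕ) (hn : 2 ≤ n) :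
    ∃ e : PresentedGroup (sphereTwoGenRels n) ≃* PresentedGroup (sphereBraidRels n),
      e (.of true) = PresentedGroup.of ⟨0, by omega⟩ ∧
      e (.of false) =
        (List.ofFn (fun i : Fin (n - 1) =>
          (PresentedGroup.of i : PresentedGroup (sphereBraidRels n)))).prod := by
  refine ⟨SphereBraid.sphereTwoGenEquiv hn, ?_, ?_⟩
  · exact (SphereBraid.toSphereBraid_of_true (by omega)).trans
      (SphereBraid.sphereBraidGen_val ⟨0, by omega⟩)
  · exact (SphereBraid.toSphereBraid_of_false (by omega)).trans SphereBraid.delta_sphereBraidGen
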